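/- For every nontrivial braid b in B_3^+ and every natural number t, one has b{t} < b in the braid order. -/

import Mathlib

namespace Braid3

/-! ### The positive 3-strand braid monoid
presented by σ1, σ2 (letters `0`, `1` of `Fin 2`) with the relation σ1σ2σ1 = σ2σ1σ2. -/

def braidRel : FreeMonoid (Fin 2) → FreeMonoid (Fin 2) → Prop := fun u v =>
  u = FreeMonoid.of 0 * FreeMonoid.of 1 * FreeMonoid.of 0 ∧
  v = FreeMonoid.of 1 * FreeMonoid.of 0 * FreeMonoid.of 1

def braidCon : Con (FreeMonoid (Fin 2)) := conGen braidRel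

/-- The positive 3-strand braid monoid `B₃⁺`. -/
abbrev B3P := braidCon.Quotient

/-- The element of `B₃⁺` represented by a word on the alphabet {σ1, σ2}. -/
def mkw (w : List (Fin 2)) : B3P := braidCon.mk' (FreeMonoid.ofList w)

/-- σ1 as an element of B₃⁺. -/
def s1 : B3P := mkw [0]
/-- σ2 as an element of B₃⁺. -/
def s2 : B3P := mkw [1]
/-- Garside's fundamental braid Δ₃ = σ1σ2σ1. -/
def Δ : B3P := mkw [0, 1, 0]

/-! ### The 3-strand braid group B₃, with the same presentation. -/

def grpRels : Set (FreeGroup (Fin 2)) :=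
  { FreeGroup.of 0 * FreeGroup.of 1 * FreeGroup.of 0 *
    (FreeGroup.of 1 * FreeGroup.of 0 * FreeGroup.of 1)⁻¹ }

abbrev B3 := PresentedGroup grpRels

def g (i : Fin 2) : B3 := PresentedGroup.of i

theorem grp_braid_rel : g 0 * g 1 * g 0 = g 1 * g 0 * g 1 := by
  show (QuotientGroup.mk (FreeGroup.of 0 * FreeGroup.of 1 * FreeGroup.of 0) : B3)
      = QuotientGroup.mk (FreeGroup.of 1 * FreeGroup.of 0 * FreeGroup.of 1)
  rw [QuotientGroup.eq]
  have h : (FreeGroup.of 0 * FreeGroup.of 1 * FreeGroup.of 0 *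
      (FreeGroup.of 1 * FreeGroup.of 0 * FreeGroup.of 1)⁻¹ : FreeGroup (Fin 2)) ∈
      Subgroup.normalClosure grpRels :=
    Subgroup.subset_normalClosure rfl
  have h2 := (Subgroup.normalClosure_normal (s := grpRels)).conj_mem _ h
      (FreeGroup.of 0 * FreeGroup.of 1 * FreeGroup.of 0)⁻¹
  simp only [inv_inv] at h2
  have h3 : ((FreeGroup.of 0 * FreeGroup.of 1 * FreeGroup.of 0 : FreeGroup (Fin 2)))⁻¹ *
      (FreeGroup.of 0 * FreeGroup.of 1 * FreeGroup.of 0 *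
        (FreeGroup.of 1 * FreeGroup.of 0 * FreeGroup.of 1)⁻¹) *
      (FreeGroup.of 0 * FreeGroup.of 1 * FreeGroup.of 0) =
      ((FreeGroup.of 0 * FreeGroup.of 1 * FreeGroup.of 0 : FreeGroup (Fin 2))⁻¹ *
        (FreeGroup.of 1 * FreeGroup.of 0 * FreeGroup.of 1))⁻¹ := by
    group
  rw [h3] at h2
  exact (Subgroup.inv_mem_iff _).mp h2

/-- The canonical embedding of B₃⁺ into B₃. -/
def ι : B3P →* B3 :=
  Con.lift _ (FreeMonoid.lift fun i => g i) (by
    refine Con.conGen_le.mpr fun u v h => ?_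
    obtain ⟨hu, hv⟩ := h
    subst hu; subst hv
    rw [Con.ker_rel]
    simp only [map_mul, FreeMonoid.lift_eval_of]
    exact grp_braid_rel)

/-! ### The braid order -/

/-- Evaluation in B₃ of a word on the letters σ1^{±1}, σ2^{±1}
(a letter `(i, true)` is σ_{i+1}, a letter `(i, false)` is σ_{i+1}⁻¹). -/
def evalSW (w : List (Fin 2 × Bool)) : B3 :=
  (w.map fun l => if l.2 then g l.1 else (g l.1)⁻¹).prod

/-- A signed word is σ-positive if the generator of highest occurring index occurs,
and occurs only positively. -/
def SigmaPos (w : List (Fin 2 × Bool)) : Prop :=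
  ∃ i : Fin 2, (i, true) ∈ w ∧ (i, false) ∉ w ∧ ∀ l ∈ w, l.1 ≤ i

/-- The braid order on the group B₃. -/
def gLt (a b : B3) : Prop := ∃ w, SigmaPos w ∧ evalSW w = a⁻¹ * b

/-- The braid order on B₃⁺. -/
def blt (a b : B3P) : Prop := gLt (ι a) (ι b)

def ble (a b : B3P) : Prop := blt a b ∨ a = b

/-! ### ϕ-normal words and exponent sequences -/

/-- The minimal legal sizes e_k^min. -/
def emin : ℕ → ℕ
  | 1 => 0
  | 2 => 1
  | _ => 2

/-- The letter of the k-th block (1-based, from the right): σ1 for odd k, σ2 for even k. -/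
def letterOf (k : ℕ) : Fin 2 := if k % 2 = 1 then 0 else 1

/-- The word σ_{[p]}^{e_p} ⋯ σ2^{e_2} σ1^{e_1} associated with the exponent
sequence `E = [e_p, …, e_1]`. -/
def wordOfExpSeq : List ℕ → List (Fin 2)
  | [] => []
  | e :: rest => List.replicate e (letterOf (rest.length + 1)) ++ wordOfExpSeq rest

/-- `expAt E k` is e_k, the k-th entry of the exponent sequence counted from the right,
1-based. -/
def expAt (E : List ℕ) (k : ℕ) : ℕ := E.getD (E.length - k) 0

/-- `E = [e_p, …, e_1]` is the exponent sequence of a ϕ-normal word: the final block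
decomposition is minimal (leading exponent nonzero) and e_k ≥ e_k^min for k < p. -/
def IsNormalSeq (E : List ℕ) : Prop :=
  E ≠ [] ∧ 1 ≤ expAt E E.length ∧ ∀ k, 1 ≤ k → k < E.length → emin k ≤ expAt E k

/-- A word on {σ1, σ2} is ϕ-normal if its (minimal) block decomposition
σ_{[p]}^{e_p} ⋯ σ2^{e_2} σ1^{e_1} satisfies e_k ≥ e_k^min for k < p. -/
def IsPhiNormalWord (w : List (Fin 2)) : Prop :=
  ∃ E, IsNormalSeq E ∧ w = wordOfExpSeq E

/-- `E` is the exponent sequence of the braid `b`. -/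
def HasExpSeq (b : B3P) (E : List ℕ) : Prop :=
  IsNormalSeq E ∧ mkw (wordOfExpSeq E) = b

/-- The exponent sequence of a (nontrivial) braid of B₃⁺. -/
noncomputable def expSeqOf (b : B3P) : List ℕ := by
  classical exact if h : ∃ E, HasExpSeq b E then h.choose else []

/-- The critical position of an exponent sequence: the least r < p with e_r > e_r^min
if it exists, and p otherwise. -/
noncomputable def critPos (E : List ℕ) : ℕ := by
  classical exact
    if h : ∃ r, 1 ≤ r ∧ r < E.length ∧ emin r < expAt E r then Nat.find h else E.length

/-- The effect of the operation b ↦ b{t} on exponent sequences: remove one letter from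
the critical block, and add t letters to the next block if the latter exists. -/
noncomputable def stepSeq (E : List ℕ) (t : ℕ) : List ℕ :=
  let p := E.length
  let r := critPos E
  let E1 := E.set (p - r) (expAt E r - 1)
  if 2 ≤ r then E1.set (p - (r - 1)) (expAt E (r - 1) + t) else E1

/-- The operation b ↦ b{t} of Definition 2.2 (with 1{t} = 1). -/
noncomputable def step (b : B3P) (t : ℕ) : B3P := by
  classical exact if b = 1 then 1 else mkw (wordOfExpSeq (stepSeq (expSeqOf b) t))

/-- The G₃-sequence from b: `gseq b 0 = b`, `gseq b t = (gseq b (t-1)){t}`. -/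
noncomputable def gseq (b : B3P) : ℕ → B3P
  | 0 => b
  | t + 1 => step (gseq b t) (t + 1)

/-- T(b): the length of the G₃-sequence from b, i.e. the least t with b{1}{2}⋯{t} = 1. -/
noncomputable def T (b : B3P) : ℕ := sInf {t | gseq b t = 1}

/-! ### The ordinal of a 3-braid, fundamental sequences, the Hardy hierarchy -/

open Ordinal in
/-- Sum Σ ω^{k-1}·(e_k − e_k^min) over the tail of an exponent sequence. -/
noncomputable def ordSeqAux : List ℕ → Ordinal
  | [] => 0
  | e :: rest =>
    omega0 ^ (rest.length : Ordinal) * ((e - emin (rest.length + 1) : ℕ) : Ordinal)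
      + ordSeqAux rest

open Ordinal in
/-- ord of an exponent sequence (e_p, …, e_1):
ω^{p−1}·e_p + Σ_{p>k≥1} ω^{k−1}·(e_k − e_k^min). -/
noncomputable def ordSeq : List ℕ → Ordinal
  | [] => 0
  | e :: rest => omega0 ^ (rest.length : Ordinal) * (e : Ordinal) + ordSeqAux rest

/-- The ordinal ord(b) < ω^ω attached to a braid of B₃⁺ (with ord(1) = 0). -/
noncomputable def ordOf (b : B3P) : Ordinal := ordSeq (expSeqOf b)

open Ordinal in
/-- Fundamental sequences: 0[x] = 0, (α+1)[x] = α, (γ + ω^{r+1})[x] = γ + ω^r·x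
(CNF decomposition), and (ω^ω)[x] = ω^x. -/
noncomputable def fundSeq (α : Ordinal) (x : ℕ) : Ordinal :=
  open scoped Classical in
  if α = 0 then 0
  else if h : ∃ β, α = β + 1 then h.choose
  else if α = omega0 ^ omega0 then omega0 ^ (x : Ordinal)
  else if h : ∃ p : Ordinal × ℕ, α = p.1 + omega0 ^ ((p.2 : Ordinal) + 1) ∧
      omega0 ^ ((p.2 : Ordinal) + 1) ∣ p.1
    then h.choose.1 + omega0 ^ (h.choose.2 : Ordinal) * (x : Ordinal)
  else 0

open Ordinal in
theorem fundSeq_lt (α : Ordinal) (x : ℕ) (h0 : ¬α = 0) (hs : ¬∃ β, α = β + 1) :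
    fundSeq α x < α := by
  classical
  rw [fundSeq]
  rw [if_neg h0, dif_neg hs]
  by_cases hw : α = omega0 ^ omega0
  · rw [if_pos hw, hw]
    exact (Ordinal.opow_lt_opow_iff_right Ordinal.one_lt_omega0).mpr (Ordinal.nat_lt_omega0 x)
  · rw [if_neg hw]
    by_cases hd : ∃ p : Ordinal × ℕ, α = p.1 + omega0 ^ ((p.2 : Ordinal) + 1) ∧
        omega0 ^ ((p.2 : Ordinal) + 1) ∣ p.1
    · rw [dif_pos hd]
      obtain ⟨hα, -⟩ := hd.choose_spec
      have hlt : omega0 ^ ((hd.choose.2 : Ordinal)) * (x : Ordinal)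
          < omega0 ^ ((hd.choose.2 : Ordinal) + 1) := by
        rw [Ordinal.add_one_eq_succ, Ordinal.opow_succ]
        exact mul_lt_mul_of_pos_left (Ordinal.nat_lt_omega0 x)
          (Ordinal.opow_pos _ Ordinal.omega0_pos)
      calc hd.choose.1 + omega0 ^ (hd.choose.2 : Ordinal) * (x : Ordinal)
          < hd.choose.1 + omega0 ^ ((hd.choose.2 : Ordinal) + 1) :=
            (add_lt_add_iff_left _).mpr hlt
        _ = α := hα.symm
    · rw [dif_neg hd]
      exact pos_iff_ne_zero.mpr h0

open Ordinal in
open scoped Classical in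
/-- The Hardy hierarchy: H_0(x) = x, H_{α+1}(x) = H_α(x+1), H_λ(x) = H_{λ[x]}(x+1). -/
noncomputable def hardy (α : Ordinal) (x : ℕ) : ℕ :=
  if α = 0 then x
  else if h : ∃ β, α = β + 1 then hardy h.choose (x + 1)
  else hardy (fundSeq α x) (x + 1)
termination_by α
decreasing_by
  · have hs := h.choose_spec
    have h2 : h.choose < h.choose + 1 := by
      rw [Ordinal.add_one_eq_succ]; exact Order.lt_succ _
    exact lt_of_lt_of_eq h2 hs.symm
  · exact fundSeq_lt _ _ (by assumption) (by assumption)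

/-! ### Garside complexity -/

/-- The Garside complexity ‖b‖: the least ℓ such that b left-divides Δ₃^ℓ. -/
noncomputable def compl (b : B3P) : ℕ := sInf {ℓ | ∃ c, b * c = Δ ^ ℓ}


/-! Write the ϕ-normal word of `b` as `A · σ_{[r]}^{e_r} · W`, with `r` the critical position and
`W` the minimal tail `σ_{[r-1]}^{e_{r-1}^min} ⋯ σ1^{e_1^min}`. Then `b{t} = A · σ_{[r]}^{e_r - 1}
σ_{[r-1]}^t · W`, so `b{t}⁻¹ b` is `σ1` if `r = 1` and `W⁻¹ σ_{[r-1]}^{-t} σ_{[r]} W` otherwise.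
For `r = 2` the tail is trivial and this is `σ1^{-t} σ2`. For `r ≥ 3`, induction on `r` using
only the braid relation shows that conjugation by `W` sends `σ_{[r]}` and `σ_{[r-1]}` to
`σ1^{r-2} σ2 σ1^{-(r-2)}` and `σ1^{r-3} σ2 σ1^{-(r-3)}`. Either way the quotient has the form
`σ1^i σ2 σ1^j`, which is σ-positive. -/

def evalWord (w : List (Fin 2)) : B3 := (w.map g).prod

lemma evalWord_append (u v : List (Fin 2)) : evalWord (u ++ v) = evalWord u * evalWord v := by
  simp [evalWord]

lemma evalWord_replicate (n : ℕ) (i : Fin 2) : evalWord (List.replicate n i) = g i ^ n := by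
  simp [evalWord]

lemma ι_mkw (w : List (Fin 2)) : ι (mkw w) = evalWord w := by
  unfold ι mkw
  erw [Con.lift_mk']
  rw [FreeMonoid.lift_apply, FreeMonoid.toList_ofList, evalWord]

lemma g0_inv_mul_g1_mul_g0 : (g 0)⁻¹ * g 1 * g 0 = g 1 * g 0 * (g 1)⁻¹ := by
  calc (g 0)⁻¹ * g 1 * g 0 = (g 0)⁻¹ * (g 1 * g 0 * g 1) * (g 1)⁻¹ := by group
    _ = (g 0)⁻¹ * (g 0 * g 1 * g 0) * (g 1)⁻¹ := by rw [grp_braid_rel]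
    _ = g 1 * g 0 * (g 1)⁻¹ := by group

lemma g1_inv_mul_g0_mul_g1 : (g 1)⁻¹ * g 0 * g 1 = g 0 * g 1 * (g 0)⁻¹ := by
  calc (g 1)⁻¹ * g 0 * g 1 = (g 1)⁻¹ * (g 0 * g 1 * g 0) * (g 0)⁻¹ := by group
    _ = (g 1)⁻¹ * (g 1 * g 0 * g 1) * (g 0)⁻¹ := by rw [grp_braid_rel]
    _ = g 0 * g 1 * (g 0)⁻¹ := by group

lemma semiconjBy_g0_mul_g1 : SemiconjBy (g 0 * g 1) (g 0) (g 1) := by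
  simp only [SemiconjBy, ← mul_assoc, grp_braid_rel]

def IsSigmaPositive (x : B3) : Prop := ∃ w, SigmaPos w ∧ evalSW w = x

lemma blt_mkw_iff (u v : List (Fin 2)) :
    blt (mkw u) (mkw v) ↔ IsSigmaPositive ((evalWord u)⁻¹ * evalWord v) := by
  rw [blt, gLt, ι_mkw, ι_mkw, IsSigmaPositive]

lemma isSigmaPositive_evalWord {w : List (Fin 2)} (hw : w ≠ []) :
    IsSigmaPositive (evalWord w) := by
  have heval : evalSW (w.map (·, true)) = evalWord w := by
    simp only [evalSW, evalWord, List.map_map]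
    rfl
  refine ⟨w.map (·, true), ?_, heval⟩
  by_cases h1 : (1 : Fin 2) ∈ w
  · exact ⟨1, List.mem_map_of_mem h1, by simp, fun l _ => Fin.le_last l.1⟩
  · have hw0 : ∀ i ∈ w, i = 0 := fun i hi => by
      fin_cases i
      · rfl
      · exact absurd hi h1
    obtain ⟨i, hi⟩ := List.exists_mem_of_ne_nil w hw
    refine ⟨0, ?_, by simp, ?_⟩
    · exact hw0 i hi ▸ List.mem_map_of_mem hi
    · simp only [List.mem_map, forall_exists_index, and_imp]
      rintro _ i hi rfl
      exact (hw0 i hi).le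

lemma evalSW_append (u v : List (Fin 2 × Bool)) : evalSW (u ++ v) = evalSW u * evalSW v := by
  simp [evalSW]

lemma evalSW_replicate_natAbs (i : Fin 2) (z : ℤ) :
    evalSW (List.replicate z.natAbs (i, decide (0 ≤ z))) = g i ^ z := by
  simp only [evalSW, List.map_replicate, List.prod_replicate]
  cases z with
  | ofNat n => simp
  | negSucc n => simp [zpow_negSucc, Int.negSucc_lt_zero n |>.not_ge]

lemma isSigmaPositive_zpow_mul_g1_mul_zpow (i j : ℤ) :
    IsSigmaPositive (g 0 ^ i * g 1 * g 0 ^ j) := by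
  -- the witness contains σ2 exactly once, positively, and otherwise only σ1^{±1}
  refine ⟨List.replicate i.natAbs (0, decide (0 ≤ i)) ++
      (1, true) :: List.replicate j.natAbs (0, decide (0 ≤ j)), ⟨1, by simp, ?_, ?_⟩, ?_⟩
  · simp [List.mem_replicate]
  · exact fun l _ => Fin.le_last l.1
  · rw [← List.singleton_append, evalSW_append, evalSW_append, evalSW_replicate_natAbs,
      evalSW_replicate_natAbs]
    simp [evalSW, mul_assoc]

def eminSeq : ℕ → List ℕ
  | 0 => []
  | k + 1 => emin (k + 1) :: eminSeq k

@[simp] lemma length_eminSeq (k : ℕ) : (eminSeq k).length = k := by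
  induction k with
  | zero => rfl
  | succ k ih => simp [eminSeq, ih]

lemma expAt_append (F : List ℕ) {G : List ℕ} {k : ℕ} (hk : k ≤ G.length) :
    expAt (F ++ G) k = expAt G k := by
  rw [expAt, expAt, List.getD_append_right _ _ _ _ (by simp; omega)]
  congr 1
  simp; omega

lemma expAt_cons (e : ℕ) {G : List ℕ} {k : ℕ} (hk : k ≤ G.length) :
    expAt (e :: G) k = expAt G k :=
  expAt_append [e] hk

lemma expAt_append_cons_length (F : List ℕ) (e : ℕ) (G : List ℕ) :
    expAt (F ++ e :: G) (G.length + 1) = e := by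
  rw [expAt_append F (by simp), expAt]
  simp

lemma eq_eminSeq_of_expAt_eq_emin {G : List ℕ}
    (h : ∀ k, 1 ≤ k → k ≤ G.length → expAt G k = emin k) : G = eminSeq G.length := by
  induction G with
  | nil => rfl
  | cons e G ih =>
    have he : e = emin (G.length + 1) := by
      simpa using expAt_append_cons_length [] e G ▸ h (G.length + 1) (by omega) (by simp)
    rw [List.length_cons, eminSeq, ← he, ← ih fun k hk1 hk2 => ?_]
    rw [← expAt_cons e hk2]
    exact h k hk1 (by simp; omega)

lemma critPos_spec {E : List ℕ} (hE : IsNormalSeq E) :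
    1 ≤ critPos E ∧ critPos E ≤ E.length ∧ 1 ≤ expAt E (critPos E) ∧
      ∀ k, 1 ≤ k → k < critPos E → expAt E k = emin k := by
  obtain ⟨hne, hlead, hnorm⟩ := hE
  have hlen : 1 ≤ E.length := List.length_pos_iff.mpr hne
  unfold critPos
  split_ifs with hex
  · obtain ⟨hr1, hrp, hr⟩ := Nat.find_spec hex
    refine ⟨hr1, hrp.le, by omega, fun k hk1 hkr => ?_⟩
    have := Nat.find_min hex hkr
    have := hnorm k hk1 (hkr.trans hrp)
    omega
  · push Not at hex
    exact ⟨hlen, le_rfl, hlead, fun k hk1 hkp => (hex k hk1 hkp).antisymm (hnorm k hk1 hkp)⟩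

lemma exists_eq_append_eminSeq {E : List ℕ} (hE : IsNormalSeq E) :
    ∃ F e k, E = F ++ (e + 1) :: eminSeq k ∧ critPos E = k + 1 := by
  obtain ⟨hr1, hrp, hre, hmin⟩ := critPos_spec hE
  set r := critPos E
  have hn : E.length - r < E.length := by omega
  set F := E.take (E.length - r)
  set G := E.drop (E.length - r + 1)
  have hsplit : E = F ++ E[E.length - r] :: G := by
    rw [← List.drop_eq_getElem_cons hn, List.take_append_drop]
  generalize E[E.length - r] = e at hsplit
  have hG : G.length = r - 1 := by simp [G]; omega
  have hGmin : G = eminSeq G.length := eq_eminSeq_of_expAt_eq_emin fun k hk1 hkG => by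
    rw [← expAt_append (F ++ [e]) hkG, List.append_assoc, List.singleton_append, ← hsplit]
    exact hmin k hk1 (by omega)
  have he : expAt E r = e := by
    have := expAt_append_cons_length F e G
    rwa [← hsplit, show G.length + 1 = r by omega] at this
  refine ⟨F, e - 1, G.length, ?_, by omega⟩
  rw [Nat.sub_add_cancel (he ▸ hre), ← hGmin]
  exact hsplit

lemma stepSeq_append_eminSeq (F : List ℕ) (e k t : ℕ)
    (hcrit : critPos (F ++ (e + 1) :: eminSeq k) = k + 1) :
    stepSeq (F ++ (e + 1) :: eminSeq k) t = F ++ e :: (eminSeq k).modifyHead (· + t) := by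
  have hlen : (F ++ (e + 1) :: eminSeq k).length = F.length + (k + 1) := by simp
  have he : expAt (F ++ (e + 1) :: eminSeq k) (k + 1) = e + 1 := by
    simpa using expAt_append_cons_length F (e + 1) (eminSeq k)
  simp only [stepSeq, hcrit, hlen, he, add_tsub_cancel_right]
  rw [List.set_append_right _ _ le_rfl, Nat.sub_self, List.set_cons_zero]
  cases k with
  | zero => simp [eminSeq]
  | succ k =>
    have hm : expAt (F ++ (e + 1) :: eminSeq (k + 1)) (k + 1) = emin (k + 1) := by
      simpa [eminSeq] using expAt_append_cons_length (F ++ [e + 1]) (emin (k + 1)) (eminSeq k)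
    rw [if_pos (by omega), hm, show F.length + (k + 1 + 1) - (k + 1) = F.length + 1 by omega,
      List.set_append_right _ _ (by omega)]
    simp [eminSeq]

lemma evalWord_wordOfExpSeq_cons (e : ℕ) (G : List ℕ) :
    evalWord (wordOfExpSeq (e :: G))
      = g (letterOf (G.length + 1)) ^ e * evalWord (wordOfExpSeq G) := by
  rw [wordOfExpSeq, evalWord_append, evalWord_replicate]

lemma inv_evalWord_wordOfExpSeq_append_mul (F : List ℕ) {R R' : List ℕ}
    (h : R'.length = R.length) :
    (evalWord (wordOfExpSeq (F ++ R')))⁻¹ * evalWord (wordOfExpSeq (F ++ R))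
      = (evalWord (wordOfExpSeq R'))⁻¹ * evalWord (wordOfExpSeq R) := by
  induction F with
  | nil => rfl
  | cons a F ih =>
    simp only [List.cons_append, evalWord_wordOfExpSeq_cons, List.length_append, h]
    rw [← ih]
    group

lemma letterOf_add_two (k : ℕ) : letterOf (k + 2) = letterOf k := by
  simp [letterOf, Nat.add_mod_right]

def eminVal (k : ℕ) : B3 := evalWord (wordOfExpSeq (eminSeq k))

lemma eminVal_succ (k : ℕ) :
    eminVal (k + 1) = g (letterOf (k + 1)) ^ emin (k + 1) * eminVal k := by
  rw [eminVal, eminSeq, evalWord_wordOfExpSeq_cons, length_eminSeq, eminVal]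

lemma conj_eminVal (k : ℕ) :
    (eminVal (k + 2))⁻¹ * g (letterOf (k + 3)) * eminVal (k + 2)
        = g 0 ^ (k + 1) * g 1 * (g 0 ^ (k + 1))⁻¹ ∧
      (eminVal (k + 2))⁻¹ * g (letterOf (k + 2)) * eminVal (k + 2)
        = g 0 ^ k * g 1 * (g 0 ^ k)⁻¹ := by
  induction k with
  | zero =>
    have h2 : eminVal 2 = g 1 := by
      simp [eminVal, eminSeq, wordOfExpSeq, evalWord, emin, letterOf]
    rw [h2, show letterOf 3 = 0 from rfl, show letterOf 2 = 1 from rfl]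
    exact ⟨by simpa using g1_inv_mul_g0_mul_g1, by group⟩
  | succ k ih =>
    obtain ⟨hX, hY⟩ := ih
    set T := eminVal (k + 2)
    set a := g (letterOf (k + 3))
    have hT : eminVal (k + 1 + 2) = a ^ 2 * T := eminVal_succ (k + 2)
    rw [hT, show k + 1 + 3 = k + 2 + 2 by rfl, letterOf_add_two]
    constructor
    · calc (a ^ 2 * T)⁻¹ * g (letterOf (k + 2)) * (a ^ 2 * T)
          = (T⁻¹ * a * T)⁻¹ * (T⁻¹ * a * T)⁻¹ * (T⁻¹ * g (letterOf (k + 2)) * T) *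
              (T⁻¹ * a * T) * (T⁻¹ * a * T) := by
            rw [sq]; group
        _ = g 0 ^ (k + 1) * ((g 1)⁻¹ * (g 1)⁻¹ * ((g 0)⁻¹ * g 1 * g 0) * g 1 * g 1) *
              (g 0 ^ (k + 1))⁻¹ := by
            rw [hX, hY]; group
        _ = g 0 ^ (k + 1) * ((g 1)⁻¹ * g 0 * g 1) * (g 0 ^ (k + 1))⁻¹ := by
            rw [g0_inv_mul_g1_mul_g0]; group
        _ = g 0 ^ (k + 1 + 1) * g 1 * (g 0 ^ (k + 1 + 1))⁻¹ := by
            rw [g1_inv_mul_g0_mul_g1]; group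
    · rw [← hX]
      group

lemma exists_conj_eminVal_eq_zpow_mul_g1_mul_zpow (k t : ℕ) :
    ∃ i j : ℤ, (eminVal (k + 1))⁻¹ * (g (letterOf (k + 1)) ^ t)⁻¹ * g (letterOf (k + 2)) *
      eminVal (k + 1) = g 0 ^ i * g 1 * g 0 ^ j := by
  cases k with
  | zero =>
    refine ⟨-t, 0, ?_⟩
    simp [eminVal, eminSeq, wordOfExpSeq, evalWord, emin, letterOf]
  | succ k =>
    obtain ⟨hX, hY⟩ := conj_eminVal k
    set T := eminVal (k + 2)
    have hconj_pow :
        (T⁻¹ * g (letterOf (k + 2)) * T) ^ t = T⁻¹ * g (letterOf (k + 2)) ^ t * T := by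
      simpa using conj_pow (a := T⁻¹) (b := g (letterOf (k + 2))) (i := t)
    have hbraid : (g 0 * g 1) * (g 0 ^ t)⁻¹ = (g 1 ^ t)⁻¹ * (g 0 * g 1) :=
      (semiconjBy_g0_mul_g1.pow_right t).inv_right
    refine ⟨k + 1, -(t + k + 1), ?_⟩
    calc T⁻¹ * (g (letterOf (k + 2)) ^ t)⁻¹ * g (letterOf (k + 3)) * T
        = ((T⁻¹ * g (letterOf (k + 2)) * T) ^ t)⁻¹ * (T⁻¹ * g (letterOf (k + 3)) * T) := by
          rw [hconj_pow]; group
      _ = g 0 ^ k * ((g 1 ^ t)⁻¹ * (g 0 * g 1)) * (g 0 ^ (k + 1))⁻¹ := by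
          rw [hX, hY, conj_pow]; group
      _ = g 0 ^ ((k + 1 : ℕ) : ℤ) * g 1 * g 0 ^ (-(t + k + 1 : ℤ)) := by
          rw [← hbraid]; group

lemma isSigmaPositive_inv_evalWord_mul_evalWord_eminSeq (e k t : ℕ) :
    IsSigmaPositive ((evalWord (wordOfExpSeq (e :: (eminSeq k).modifyHead (· + t))))⁻¹ *
      evalWord (wordOfExpSeq ((e + 1) :: eminSeq k))) := by
  cases k with
  | zero =>
    convert isSigmaPositive_evalWord (w := [0]) (List.cons_ne_nil _ _) using 1
    simp [eminSeq, wordOfExpSeq, evalWord, pow_succ, letterOf]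
  | succ k =>
    obtain ⟨i, j, hij⟩ := exists_conj_eminVal_eq_zpow_mul_g1_mul_zpow k t
    convert isSigmaPositive_zpow_mul_g1_mul_zpow i j using 1
    rw [← hij, eminVal_succ, eminVal]
    simp only [eminSeq, List.modifyHead_cons, evalWord_wordOfExpSeq_cons, List.length_cons,
      length_eminSeq, pow_add]
    group

lemma mkw_surjective : Function.Surjective mkw := fun b => by
  obtain ⟨x, rfl⟩ := Con.mk'_surjective (c := braidCon) b
  exact ⟨x.toList, by rw [mkw, FreeMonoid.ofList_toList]⟩

lemma mkw_nil : mkw [] = 1 := map_one braidCon.mk'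

lemma one_blt_of_ne_one {b : B3P} (hb : b ≠ 1) : blt 1 b := by
  obtain ⟨w, rfl⟩ := mkw_surjective b
  have hw : w ≠ [] := by rintro rfl; exact hb mkw_nil
  rw [← mkw_nil, blt_mkw_iff, evalWord, List.map_nil, List.prod_nil, inv_one, one_mul]
  exact isSigmaPositive_evalWord hw

lemma stepSeq_nil (t : ℕ) : stepSeq [] t = [] := by
  simp [stepSeq]

/-- For every nontrivial braid b in B₃⁺ and every t, b{t} < b in the braid order. -/
theorem step_lt (b : B3P) (hb : b ≠ 1) (t : ℕ) : blt (step b t) b := by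
  by_cases h : ∃ E, HasExpSeq b E
  · obtain ⟨hE, hbE⟩ : HasExpSeq b (expSeqOf b) := by
      rw [expSeqOf, dif_pos h]
      exact h.choose_spec
    rw [step, if_neg hb]
    generalize expSeqOf b = E at hE hbE ⊢
    subst hbE
    obtain ⟨F, e, k, rfl, hcrit⟩ := exists_eq_append_eminSeq hE
    rw [stepSeq_append_eminSeq F e k t hcrit, blt_mkw_iff,
      inv_evalWord_wordOfExpSeq_append_mul F (by cases k <;> simp)]
    exact isSigmaPositive_inv_evalWord_mul_evalWord_eminSeq e k t
  · -- junk value of `expSeqOf`: then `b{t} = 1`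
    have hstep : step b t = 1 := by
      rw [step, if_neg hb, expSeqOf, dif_neg h, stepSeq_nil, wordOfExpSeq, mkw_nil]
    rw [hstep]
    exact one_blt_of_ne_one hb

end Braid3
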